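/- arXiv:math/0411254 — 2 statements merged into one kernel-verified Lean document; each statement's English description precedes it below -/
import Mathlib

section
/- Let g be a 6-dimensional real Lie algebra with structure equations h3 = (0,0,0,0,0,12+34), let (J, ⟨·,·⟩) be a Hermitian structure on g with fundamental form Ω, and let θ be a closed 1-form on g (θ([X,Y]) = 0 for all X,Y) with dΩ = θ∧Ω. Let ∇ : g × g → g be the bilinear map determined by the Koszul formula 2⟨∇_X Y, Z⟩ = ⟨[X,Y],Z⟩ − ⟨[Y,Z],X⟩ + ⟨[Z,X],Y⟩ for all X, Y, Z ∈ g (the Levi-Civita product of the invariant metric). Then θ(∇_X Y) = 0 for all X, Y ∈ g; that is, the Lee form θ is parallel with respect to the Levi-Civita connection, so the metric is a generalized Hopf metric. -/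
noncomputable section

open Complex

/-- An integrable complex structure on a real Lie algebra: an ℝ-linear map with
`J ∘ J = -id` satisfying the Nijenhuis integrability condition. -/
def IsComplexStructure {g : Type*} [LieRing g] [LieAlgebra ℝ g] (J : g →ₗ[ℝ] g) : Prop :=
  (∀ x, J (J x) = -x) ∧
  (∀ x y : g, ⁅J x, J y⁆ = J ⁅J x, y⁆ + J ⁅x, J y⁆ + ⁅x, y⁆)

/-- A (1,0)-form of `(g, J)`. -/
def IsOneZero {g : Type*} [LieRing g] [LieAlgebra ℝ g] (J : g →ₗ[ℝ] g)
    (ω : g →ₗ[ℝ] ℂ) : Prop :=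
  ∀ x, ω (J x) = Complex.I * ω x

/-- `ω 0, ω 1, ω 2` is a basis of the space of (1,0)-forms of `(g, J)`. -/
def IsOneZeroBasis {g : Type*} [LieRing g] [LieAlgebra ℝ g] (J : g →ₗ[ℝ] g)
    (ω : Fin 3 → (g →ₗ[ℝ] ℂ)) : Prop :=
  (∀ k, IsOneZero J (ω k)) ∧ LinearIndependent ℂ ω ∧
  ∀ η : g →ₗ[ℝ] ℂ, IsOneZero J η → η ∈ Submodule.span ℂ (Set.range ω)

/-- Wedge product of two ℂ-valued 1-forms, evaluated at a pair of vectors. -/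
def wC {g : Type*} (α β : g → ℂ) (x y : g) : ℂ := α x * β y - α y * β x

/-- Wedge product of two ℝ-valued 1-forms, evaluated at a pair of vectors. -/
def wR {g : Type*} (α β : g → ℝ) (x y : g) : ℝ := α x * β y - α y * β x

/-- Pointwise complex conjugate of a ℂ-valued 1-form. -/
def cg {g : Type*} (α : g → ℂ) : g → ℂ := fun x => (starRingEnd ℂ) (α x)

/-- The ascending series of `g` adapted to `J`. -/
def ascSeries {g : Type*} [LieRing g] [LieAlgebra ℝ g] (J : g →ₗ[ℝ] g) : ℕ → Set g
  | 0 => {0}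
  | (l + 1) => {x | (∀ y, ⁅x, y⁆ ∈ ascSeries J l) ∧ (∀ y, ⁅J x, y⁆ ∈ ascSeries J l)}

/-- `J` is a nilpotent complex structure. -/
def IsNilpotentJ {g : Type*} [LieRing g] [LieAlgebra ℝ g] (J : g →ₗ[ℝ] g) : Prop :=
  ∃ l, ascSeries J l = Set.univ

/-- The descending (lower) central series of `g` as ℝ-submodules. -/
def lcs (g : Type*) [LieRing g] [LieAlgebra ℝ g] : ℕ → Submodule ℝ g
  | 0 => ⊤
  | (k + 1) => Submodule.span ℝ {z | ∃ x ∈ lcs g k, ∃ y : g, z = ⁅x, y⁆}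

/-- `g` is a nilpotent Lie algebra. -/
def IsNilpotentLA (g : Type*) [LieRing g] [LieAlgebra ℝ g] : Prop :=
  ∃ k, lcs g k = ⊥

/-- The center of `g`, as an ℝ-submodule. -/
def centerS (g : Type*) [LieRing g] [LieAlgebra ℝ g] : Submodule ℝ g where
  carrier := {x : g | ∀ y : g, ⁅x, y⁆ = 0}
  add_mem' := fun ha hb => fun y => by rw [add_lie, ha y, hb y, add_zero]
  zero_mem' := fun y => zero_lie y
  smul_mem' := fun c x hx => fun y => by rw [smul_lie, hx y, smul_zero]

/-- A Hermitian structure: an inner product compatible with `J`. -/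
def IsHermitian {g : Type*} [LieRing g] [LieAlgebra ℝ g] (J : g →ₗ[ℝ] g)
    (m : g →ₗ[ℝ] g →ₗ[ℝ] ℝ) : Prop :=
  (∀ x y, m x y = m y x) ∧ (∀ x, x ≠ 0 → 0 < m x x) ∧ (∀ x y, m (J x) (J y) = m x y)

/-- The fundamental 2-form `Ω(x,y) = ⟨Jx, y⟩`. -/
def fund {g : Type*} [LieRing g] [LieAlgebra ℝ g] (J : g →ₗ[ℝ] g)
    (m : g →ₗ[ℝ] g →ₗ[ℝ] ℝ) (x y : g) : ℝ := m (J x) y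

/-- Chevalley–Eilenberg differential of a 2-form. -/
def d2 {g : Type*} [LieRing g] [LieAlgebra ℝ g] (Ω : g → g → ℝ) (x y z : g) : ℝ :=
  -Ω ⁅x, y⁆ z + Ω ⁅x, z⁆ y - Ω ⁅y, z⁆ x

/-- Action of `J` on a 3-form: `(Jα)(x,y,z) = -α(Jx,Jy,Jz)`. -/
def J3 {g : Type*} [LieRing g] [LieAlgebra ℝ g] (J : g →ₗ[ℝ] g)
    (α : g → g → g → ℝ) (x y z : g) : ℝ := -α (J x) (J y) (J z)

/-- Chevalley–Eilenberg differential of a 3-form. -/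
def d3 {g : Type*} [LieRing g] [LieAlgebra ℝ g] (α : g → g → g → ℝ) (x y z w : g) : ℝ :=
  -α ⁅x, y⁆ z w + α ⁅x, z⁆ y w - α ⁅x, w⁆ y z
    - α ⁅y, z⁆ x w + α ⁅y, w⁆ x z - α ⁅z, w⁆ x y

/-- SKT (strong Kähler with torsion): `dΩ ≠ 0` and `d(J dΩ) = 0`. -/
def IsSKT {g : Type*} [LieRing g] [LieAlgebra ℝ g] (J : g →ₗ[ℝ] g)
    (m : g →ₗ[ℝ] g →ₗ[ℝ] ℝ) : Prop :=
  (∃ x y z, d2 (fund J m) x y z ≠ 0) ∧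
  (∀ x y z w, d3 (J3 J (d2 (fund J m))) x y z w = 0)

/-- The 4-form `Ω ∧ Ω`. -/
def sq4 {g : Type*} (Ω : g → g → ℝ) (x1 x2 x3 x4 : g) : ℝ :=
  2 * (Ω x1 x2 * Ω x3 x4 - Ω x1 x3 * Ω x2 x4 + Ω x1 x4 * Ω x2 x3)

/-- Chevalley–Eilenberg differential of a 4-form. -/
def d4 {g : Type*} [LieRing g] [LieAlgebra ℝ g] (α : g → g → g → g → ℝ)
    (x0 x1 x2 x3 x4 : g) : ℝ :=
  -α ⁅x0, x1⁆ x2 x3 x4 + α ⁅x0, x2⁆ x1 x3 x4 - α ⁅x0, x3⁆ x1 x2 x4 + α ⁅x0, x4⁆ x1 x2 x3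
    - α ⁅x1, x2⁆ x0 x3 x4 + α ⁅x1, x3⁆ x0 x2 x4 - α ⁅x1, x4⁆ x0 x2 x3
    - α ⁅x2, x3⁆ x0 x1 x4 + α ⁅x2, x4⁆ x0 x1 x3 - α ⁅x3, x4⁆ x0 x1 x2

/-- Balanced Hermitian structure in dimension 6: `d(Ω ∧ Ω) = 0`. -/
def IsBalanced {g : Type*} [LieRing g] [LieAlgebra ℝ g] (J : g →ₗ[ℝ] g)
    (m : g →ₗ[ℝ] g →ₗ[ℝ] ℝ) : Prop :=
  ∀ x0 x1 x2 x3 x4, d4 (sq4 (fund J m)) x0 x1 x2 x3 x4 = 0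

/-- Locally conformal Kähler: `dΩ = θ ∧ Ω` for a closed 1-form `θ`. -/
def IsLCK {g : Type*} [LieRing g] [LieAlgebra ℝ g] (J : g →ₗ[ℝ] g)
    (m : g →ₗ[ℝ] g →ₗ[ℝ] ℝ) : Prop :=
  ∃ θ : g →ₗ[ℝ] ℝ, (∀ x y : g, θ ⁅x, y⁆ = 0) ∧
    ∀ x y z, d2 (fund J m) x y z =
      θ x * fund J m y z - θ y * fund J m x z + θ z * fund J m x y

/-- `g` has structure equations `(0,0,0,0,0,0)` (abelian). -/
def IsH1 (g : Type*) [LieRing g] [LieAlgebra ℝ g] : Prop :=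
  ∃ α : Module.Basis (Fin 6) ℝ (Module.Dual ℝ g),
    ∀ i, ∀ x y : g, α i ⁅x, y⁆ = 0

/-- `g` has structure equations `(0,0,0,0,12,34)`. -/
def IsH2 (g : Type*) [LieRing g] [LieAlgebra ℝ g] : Prop :=
  ∃ α : Module.Basis (Fin 6) ℝ (Module.Dual ℝ g),
    (∀ i : Fin 6, i.val < 4 → ∀ x y : g, α i ⁅x, y⁆ = 0) ∧
    (∀ x y : g, -(α 4 ⁅x, y⁆) = wR (α 0) (α 1) x y) ∧
    (∀ x y : g, -(α 5 ⁅x, y⁆) = wR (α 2) (α 3) x y)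

/-- `g` has structure equations `(0,0,0,0,0,12+34)`. -/
def IsH3 (g : Type*) [LieRing g] [LieAlgebra ℝ g] : Prop :=
  ∃ α : Module.Basis (Fin 6) ℝ (Module.Dual ℝ g),
    (∀ i : Fin 6, i.val < 5 → ∀ x y : g, α i ⁅x, y⁆ = 0) ∧
    (∀ x y : g, -(α 5 ⁅x, y⁆) = wR (α 0) (α 1) x y + wR (α 2) (α 3) x y)

/-- `g` has structure equations `(0,0,0,0,12,14+23)`. -/
def IsH4 (g : Type*) [LieRing g] [LieAlgebra ℝ g] : Prop :=
  ∃ α : Module.Basis (Fin 6) ℝ (Module.Dual ℝ g),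
    (∀ i : Fin 6, i.val < 4 → ∀ x y : g, α i ⁅x, y⁆ = 0) ∧
    (∀ x y : g, -(α 4 ⁅x, y⁆) = wR (α 0) (α 1) x y) ∧
    (∀ x y : g, -(α 5 ⁅x, y⁆) = wR (α 0) (α 3) x y + wR (α 1) (α 2) x y)

/-- `g` has structure equations `(0,0,0,0,13+42,14+23)`. -/
def IsH5 (g : Type*) [LieRing g] [LieAlgebra ℝ g] : Prop :=
  ∃ α : Module.Basis (Fin 6) ℝ (Module.Dual ℝ g),
    (∀ i : Fin 6, i.val < 4 → ∀ x y : g, α i ⁅x, y⁆ = 0) ∧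
    (∀ x y : g, -(α 4 ⁅x, y⁆) = wR (α 0) (α 2) x y + wR (α 3) (α 1) x y) ∧
    (∀ x y : g, -(α 5 ⁅x, y⁆) = wR (α 0) (α 3) x y + wR (α 1) (α 2) x y)

/-- `g` has structure equations `(0,0,0,0,12,13)`. -/
def IsH6 (g : Type*) [LieRing g] [LieAlgebra ℝ g] : Prop :=
  ∃ α : Module.Basis (Fin 6) ℝ (Module.Dual ℝ g),
    (∀ i : Fin 6, i.val < 4 → ∀ x y : g, α i ⁅x, y⁆ = 0) ∧
    (∀ x y : g, -(α 4 ⁅x, y⁆) = wR (α 0) (α 1) x y) ∧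
    (∀ x y : g, -(α 5 ⁅x, y⁆) = wR (α 0) (α 2) x y)

/-- `g` has structure equations `(0,0,0,0,0,12)`. -/
def IsH8 (g : Type*) [LieRing g] [LieAlgebra ℝ g] : Prop :=
  ∃ α : Module.Basis (Fin 6) ℝ (Module.Dual ℝ g),
    (∀ i : Fin 6, i.val < 5 → ∀ x y : g, α i ⁅x, y⁆ = 0) ∧
    (∀ x y : g, -(α 5 ⁅x, y⁆) = wR (α 0) (α 1) x y)

/-- `g` has structure equations `(0,0,0,12,23,14-35)`. -/
def IsH19neg (g : Type*) [LieRing g] [LieAlgebra ℝ g] : Prop :=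
  ∃ α : Module.Basis (Fin 6) ℝ (Module.Dual ℝ g),
    (∀ i : Fin 6, i.val < 3 → ∀ x y : g, α i ⁅x, y⁆ = 0) ∧
    (∀ x y : g, -(α 3 ⁅x, y⁆) = wR (α 0) (α 1) x y) ∧
    (∀ x y : g, -(α 4 ⁅x, y⁆) = wR (α 1) (α 2) x y) ∧
    (∀ x y : g, -(α 5 ⁅x, y⁆) = wR (α 0) (α 3) x y - wR (α 2) (α 4) x y)

/-- `g` has structure equations `(0,0,12,13,23,14+25)`. -/
def IsH26pos (g : Type*) [LieRing g] [LieAlgebra ℝ g] : Prop :=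
  ∃ α : Module.Basis (Fin 6) ℝ (Module.Dual ℝ g),
    (∀ i : Fin 6, i.val < 2 → ∀ x y : g, α i ⁅x, y⁆ = 0) ∧
    (∀ x y : g, -(α 2 ⁅x, y⁆) = wR (α 0) (α 1) x y) ∧
    (∀ x y : g, -(α 3 ⁅x, y⁆) = wR (α 0) (α 2) x y) ∧
    (∀ x y : g, -(α 4 ⁅x, y⁆) = wR (α 1) (α 2) x y) ∧
    (∀ x y : g, -(α 5 ⁅x, y⁆) = wR (α 0) (α 3) x y + wR (α 1) (α 4) x y)


/-- any invariant LCK metric on `h3` is a generalized Hopf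
metric: the Lee form is parallel for the Levi-Civita connection. -/
theorem lck_on_h3_is_generalized_Hopf
    (g : Type*) [LieRing g] [LieAlgebra ℝ g]
    (hdim : Module.finrank ℝ g = 6) (hg : IsH3 g)
    (J : g →ₗ[ℝ] g) (hJ : IsComplexStructure J)
    (m : g →ₗ[ℝ] g →ₗ[ℝ] ℝ) (hm : IsHermitian J m)
    (θ : g →ₗ[ℝ] ℝ) (hθ : ∀ x y : g, θ ⁅x, y⁆ = 0)
    (hLCK : ∀ x y z : g, d2 (fund J m) x y z =
      θ x * fund J m y z - θ y * fund J m x z + θ z * fund J m x y)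
    (nabla : g → g → g)
    (hK : ∀ x y z : g, 2 * m (nabla x y) z =
      m ⁅x, y⁆ z - m ⁅y, z⁆ x + m ⁅z, x⁆ y) :
    ∀ x y : g, θ (nabla x y) = 0 := by
  obtain ⟨α, hα1, hα2⟩ := hg
  haveI : FiniteDimensional ℝ g := FiniteDimensional.of_finrank_pos (by rw [hdim]; norm_num)
  set ξ : g := (Module.evalEquiv ℝ g).symm (α.coord 5) with hξdef
  have hξ5 : α 5 ξ = 1 := by
    rw [hξdef, Module.apply_evalEquiv_symm_apply, Module.Basis.coord_apply, Module.Basis.repr_self,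
      Finsupp.single_eq_same]
  have hξj : ∀ j : Fin 6, j ≠ 5 → α j ξ = 0 := by
    intro j hj
    rw [hξdef, Module.apply_evalEquiv_symm_apply, Module.Basis.coord_apply, Module.Basis.repr_self]
    exact Finsupp.single_eq_of_ne' hj
  have hξne : ξ ≠ 0 := by
    intro h
    rw [h, map_zero] at hξ5
    norm_num at hξ5
  -- every bracket is a multiple of ξ
  have hbrk : ∀ x y : g, ⁅x, y⁆ = (α 5 ⁅x, y⁆) • ξ := by
    intro x y
    have key : ∀ j : Fin 6, α j (⁅x, y⁆ - (α 5 ⁅x, y⁆) • ξ) = 0 := by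
      intro j
      rw [map_sub, map_smul]
      by_cases hj : j = 5
      · subst hj; rw [hξ5]; simp
      · have hjlt : j.val < 5 := by
          have h6 : j.val < 6 := j.isLt
          have : j.val ≠ 5 := fun h => hj (Fin.ext h)
          omega
        rw [hα1 j hjlt, hξj j hj]
        simp
    have hall : ∀ φ : Module.Dual ℝ g, φ (⁅x, y⁆ - (α 5 ⁅x, y⁆) • ξ) = 0 := by
      intro φ
      rw [← α.sum_repr φ]
      simp only [LinearMap.coe_sum, Finset.sum_apply, LinearMap.smul_apply, smul_eq_mul]
      simp [key]
    have := (Module.forall_dual_apply_eq_zero_iff ℝ (⁅x, y⁆ - (α 5 ⁅x, y⁆) • ξ)).mp hall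
    exact sub_eq_zero.mp this
  -- ξ is central
  have hcent : ∀ y : g, ⁅ξ, y⁆ = 0 := by
    intro y
    have h5 : α 5 ⁅ξ, y⁆ = 0 := by
      have h := hα2 ξ y
      simp only [wR, hξj 0 (by decide), hξj 1 (by decide), hξj 2 (by decide),
        hξj 3 (by decide)] at h
      have : -(α 5 ⁅ξ, y⁆) = 0 := by rw [h]; ring
      linarith
    rw [hbrk ξ y, h5, zero_smul]
  have hJJ := hJ.1
  have hJξne : J ξ ≠ 0 := by
    intro h
    apply hξne
    have h2 := hJJ ξ
    rw [h, map_zero] at h2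
    exact neg_eq_zero.mp h2.symm
  -- J ξ is central (uses integrability)
  have hJξcent : ∀ y : g, ⁅J ξ, y⁆ = 0 := by
    intro y
    have hb : ⁅J ξ, y⁆ = (α 5 ⁅J ξ, y⁆) • ξ := hbrk _ _
    have e1 : (α 5 ⁅J ξ, J y⁆) • ξ = (α 5 ⁅J ξ, y⁆) • J ξ := by
      have h := hJ.2 ξ y
      rw [hcent y, hcent (J y), map_zero, add_zero, add_zero] at h
      rw [hbrk (J ξ) (J y), hbrk (J ξ) y, map_smul] at h
      exact h
    set c1 := α 5 ⁅J ξ, J y⁆ with hc1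
    set c2 := α 5 ⁅J ξ, y⁆ with hc2
    have e2 : c1 • J ξ = (-c2) • ξ := by
      have h := congrArg J e1
      rw [map_smul, map_smul, hJJ ξ, smul_neg, ← neg_smul] at h
      exact h
    have a1 : (c1 * c1) • J ξ = (c1 * (-c2)) • ξ := by
      rw [mul_smul, e2, mul_smul]
    have a2 : (c2 * c2) • J ξ = (c2 * c1) • ξ := by
      rw [mul_smul, ← e1, mul_smul]
    have e3 : (c1 * c1 + c2 * c2) • J ξ = 0 := by
      rw [add_smul, a1, a2, ← add_smul]
      have : c1 * -c2 + c2 * c1 = 0 := by ring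
      rw [this, zero_smul]
    have hcc : c1 * c1 + c2 * c2 = 0 := by
      rcases smul_eq_zero.mp e3 with h | h
      · exact h
      · exact absurd h hJξne
    have hc20 : c2 = 0 := by nlinarith [mul_self_nonneg c1, mul_self_nonneg c2]
    rw [hb, hc20, zero_smul]
  have hmsym := hm.1
  have hmpos := hm.2.1
  have hmJ := hm.2.2
  have hmJξξ : m (J ξ) ξ = 0 := by
    have h1 : m (J (J ξ)) (J ξ) = m (J ξ) ξ := hmJ (J ξ) ξ
    rw [hJJ ξ, map_neg, LinearMap.neg_apply, hmsym ξ (J ξ)] at h1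
    linarith
  have hmξJξ : m ξ (J ξ) = 0 := by rw [hmsym]; exact hmJξξ
  -- contracting the LCK equation with ξ
  have star : ∀ y z : g, 0 = θ ξ * m (J y) z - θ y * m (J ξ) z + θ z * m (J ξ) y := by
    intro y z
    have h := hLCK ξ y z
    simp only [d2, fund] at h
    rw [hcent y, hcent z, hbrk y z] at h
    simp only [map_zero, LinearMap.zero_apply, map_smul, LinearMap.smul_apply,
      smul_eq_mul, hmJξξ, mul_zero, neg_zero, add_zero, zero_add, sub_zero, zero_sub] at h
    linarith [h]
  -- step 1: θ ξ = 0
  have hθξ : θ ξ = 0 := by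
    by_contra ht
    obtain ⟨y, hy, hyne⟩ : ∃ y : g, y ∈ LinearMap.ker (θ.prod (θ ∘ₗ J)) ∧ y ≠ 0 := by
      apply (Submodule.ne_bot_iff _).mp
      intro hker
      have hinj : Function.Injective (θ.prod (θ ∘ₗ J)) := LinearMap.ker_eq_bot.mp hker
      have hle := LinearMap.finrank_le_finrank_of_injective hinj
      rw [hdim] at hle
      have : Module.finrank ℝ (ℝ × ℝ) = 2 := by simp
      omega
    have hy0 : θ y = 0 ∧ θ (J y) = 0 := by
      have h := LinearMap.mem_ker.mp hy
      have h1 := congrArg Prod.fst h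
      have h2 := congrArg Prod.snd h
      exact ⟨h1, h2⟩
    have h := star y (J y)
    rw [hy0.1, hy0.2] at h
    have hpos : 0 < m (J y) (J y) := by
      rw [hmJ y y]
      exact hmpos y hyne
    have : θ ξ * m (J y) (J y) = 0 := by linarith
    rcases mul_eq_zero.mp this with h' | h'
    · exact ht h'
    · linarith
  have prop : ∀ y z : g, θ y * m (J ξ) z = θ z * m (J ξ) y := by
    intro y z
    have h := star y z
    rw [hθξ] at h
    linarith
  -- conclusion
  intro x y
  by_cases hθ0 : ∀ v : g, θ v = 0
  · exact hθ0 _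
  push_neg at hθ0
  obtain ⟨v, hv⟩ := hθ0
  have hmv : m (J ξ) v ≠ 0 := by
    intro h
    have hp := prop v (J ξ)
    rw [h, mul_zero] at hp
    have hpos : 0 < m (J ξ) (J ξ) := hmpos (J ξ) hJξne
    rcases mul_eq_zero.mp hp with h' | h'
    · exact hv h'
    · linarith
  have hnz : m (nabla x y) (J ξ) = 0 := by
    have h := hK x y (J ξ)
    have hy1 : ⁅y, J ξ⁆ = 0 := by
      rw [← lie_skew, hJξcent y, neg_zero]
    rw [hbrk x y, hJξcent x, hy1] at h
    simp only [map_zero, LinearMap.zero_apply, map_smul, LinearMap.smul_apply,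
      smul_eq_mul, hmξJξ, mul_zero, sub_zero, add_zero] at h
    linarith
  have hp := prop (nabla x y) v
  rw [hmsym (J ξ) (nabla x y), hnz, mul_zero] at hp
  exact (mul_eq_zero.mp hp).resolve_right hmv

end
end

section
/- Let g be a nonabelian nilpotent real Lie algebra of even dimension 2n ≥ 6 with a Hermitian structure (J, ⟨·,·⟩) and fundamental form Ω. Then (J, ⟨·,·⟩) cannot be simultaneously SKT and LCK: if dΩ ≠ 0 and d(J(dΩ)) = 0, then there is no closed 1-form θ on g (θ([X,Y]) = 0 for all X,Y) with dΩ = θ∧Ω. -/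
noncomputable section

open Complex

set_option maxHeartbeats 1000000

/-- on a nonabelian nilpotent Lie algebra of even dimension
`2n ≥ 6`, a Hermitian structure cannot be SKT and LCK at the same time. -/
theorem skt_and_lck_incompatible
    (g : Type*) [LieRing g] [LieAlgebra ℝ g] (n : ℕ) (hn : 3 ≤ n)
    (hdim : Module.finrank ℝ g = 2 * n)
    (hnonab : ∃ x y : g, ⁅x, y⁆ ≠ 0) (hnil : IsNilpotentLA g)
    (J : g →ₗ[ℝ] g) (hJ : IsComplexStructure J)
    (m : g →ₗ[ℝ] g →ₗ[ℝ] ℝ) (hm : IsHermitian J m)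
    (hSKT : IsSKT J m) :
    ¬ ∃ θ : g →ₗ[ℝ] ℝ, (∀ x y : g, θ ⁅x, y⁆ = 0) ∧
      ∀ x y z : g, d2 (fund J m) x y z =
        θ x * fund J m y z - θ y * fund J m x z + θ z * fund J m x y := by
  rintro ⟨θ, hθc, hLCK⟩
  classical
  obtain ⟨hsym, hpos, hcomp⟩ := hm
  have hJJ := hJ.1
  -- θ is nonzero
  have hθne : ∃ v : g, θ v ≠ 0 := by
    by_contra h
    push_neg at h
    obtain ⟨x₀, y₀, z₀, hd⟩ := hSKT.1
    exact hd (by rw [hLCK x₀ y₀ z₀, h, h, h]; ring)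
  -- finite dimensionality and inner product space structure
  haveI : FiniteDimensional ℝ g := FiniteDimensional.of_finrank_pos (by omega)
  have hmz : ∀ x : g, 0 ≤ m x x := by
    intro x
    rcases eq_or_ne x 0 with rfl | hx
    · simp
    · exact le_of_lt (hpos x hx)
  let core : InnerProductSpace.Core ℝ g :=
    { inner := fun x y => m x y
      conj_inner_symm := fun x y => by simpa using hsym y x
      re_inner_nonneg := fun x => by simpa using hmz x
      definite := fun x hx => by
        by_contra hne
        exact absurd hx (ne_of_gt (hpos x hne))
      add_left := fun x y z => by simp
      smul_left := fun x y r => by simp }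
  letI : NormedAddCommGroup g := core.toNormedAddCommGroup
  letI : InnerProductSpace ℝ g := InnerProductSpace.ofCore core.toCore
  set N := Module.finrank ℝ g with hN
  have hN6 : 6 ≤ N := by omega
  let b : OrthonormalBasis (Fin N) ℝ g := stdOrthonormalBasis ℝ g
  have hinner : ∀ x y : g, (inner ℝ x y : ℝ) = m x y := fun x y => rfl
  have hone : ∀ i, m (b i) (b i) = 1 := by
    intro i
    have := (orthonormal_iff_ite.mp b.orthonormal) i i
    rw [hinner] at this
    simpa using this
  have hrepr : ∀ (f : g →ₗ[ℝ] ℝ) (v : g), ∑ i, m v (b i) * f (b i) = f v := by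
    intro f v
    conv_rhs => rw [← b.sum_repr v]
    rw [map_sum]
    refine Finset.sum_congr rfl fun i _ => ?_
    rw [map_smul, smul_eq_mul, b.repr_apply_apply, hinner, hsym]
  -- the 2-form γ = dβ - β∧θ as a family of linear maps
  set T : g → (g →ₗ[ℝ] ℝ) := fun x =>
    θ x • (θ ∘ₗ J) - θ (J x) • θ - (θ ∘ₗ (J ∘ₗ (LieAlgebra.ad ℝ g x))) with hT
  have hGapp : ∀ x y : g, T x y = θ x * θ (J y) - θ (J x) * θ y - θ (J ⁅x, y⁆) := by
    intro x y
    simp [hT, LieAlgebra.ad_apply, smul_eq_mul]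
  have hanti : ∀ x y : g, T y x = -T x y := by
    intro x y
    rw [hGapp, hGapp, show ⁅y, x⁆ = -⁅x, y⁆ from (lie_skew y x).symm, map_neg, map_neg]
    ring
  -- key 4-form identity: γ ∧ Ω = 0, as a consequence of SKT + LCK
  have hα : ∀ a b c : g, J3 J (d2 (fund J m)) a b c =
      -(θ (J a) * m (J b) c - θ (J b) * m (J a) c + θ (J c) * m (J a) b) := by
    intro a b c
    have h1 := hLCK (J a) (J b) (J c)
    simp only [d2, fund] at h1
    simp only [J3, d2, fund]
    linear_combination (-1 : ℝ) * h1 - θ (J a) * hcomp (J b) c + θ (J b) * hcomp (J a) c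
      - θ (J c) * hcomp (J a) b
  have key4 : ∀ x y z w : g,
      T x y * m (J z) w - T x z * m (J y) w + T x w * m (J y) z
        + T y z * m (J x) w - T y w * m (J x) z + T z w * m (J x) y = 0 := by
    intro x y z w
    have H := hSKT.2 x y z w
    simp only [d3] at H
    rw [hα, hα, hα, hα, hα, hα] at H
    have L1 := hLCK y z w
    have L2 := hLCK x z w
    have L3 := hLCK x y w
    have L4 := hLCK x y z
    simp only [d2, fund] at L1 L2 L3 L4
    simp only [hGapp]
    linear_combination (-1 : ℝ) * H + θ (J x) * L1 - θ (J y) * L2 + θ (J z) * L3 - θ (J w) * L4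
  -- contraction: (N - 4) T x y + c Ω(x,y) = 0 where c = Σ T(bᵢ, Jbᵢ)
  set c : ℝ := ∑ i, T (b i) (J (b i)) with hc
  have hW : ∀ x y : g, (N : ℝ) * T x y - 4 * T x y + c * m (J x) y = 0 := by
    intro x y
    have hTi : ∀ i, T x y * m (b i) (b i) - m y (b i) * T x (b i)
        + m (J y) (b i) * T x (J (b i)) + m x (b i) * T y (b i)
        - m (J x) (b i) * T y (J (b i)) + T (b i) (J (b i)) * m (J x) y = 0 := by
      intro i
      have k := key4 x y (b i) (J (b i))
      have c1 := hcomp y (b i)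
      have c2 := hcomp x (b i)
      have c3 := hcomp (b i) (b i)
      linear_combination k + T x (b i) * c1 - T y (b i) * c2 - T x y * c3
    have hsum0 : ∑ i, (T x y * m (b i) (b i) - m y (b i) * T x (b i)
        + m (J y) (b i) * T x (J (b i)) + m x (b i) * T y (b i)
        - m (J x) (b i) * T y (J (b i)) + T (b i) (J (b i)) * m (J x) y) = 0 :=
      Finset.sum_eq_zero fun i _ => hTi i
    rw [Finset.sum_add_distrib, Finset.sum_sub_distrib, Finset.sum_add_distrib,
      Finset.sum_add_distrib, Finset.sum_sub_distrib] at hsum0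
    have S1 : ∑ i, T x y * m (b i) (b i) = (N : ℝ) * T x y := by
      simp [hone, Finset.sum_const, Finset.card_univ, mul_comm]
    have S2 : ∑ i, m y (b i) * T x (b i) = T x y := hrepr (T x) y
    have S3 : ∑ i, m (J y) (b i) * T x (J (b i)) = -T x y := by
      have h := hrepr ((T x).comp J) (J y)
      simp only [LinearMap.comp_apply] at h
      rw [hJJ, map_neg] at h
      exact h
    have S4 : ∑ i, m x (b i) * T y (b i) = -T x y := by
      rw [hrepr (T y) x, hanti]
    have S5 : ∑ i, m (J x) (b i) * T y (J (b i)) = T x y := by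
      have h := hrepr ((T y).comp J) (J x)
      simp only [LinearMap.comp_apply] at h
      rw [hJJ, map_neg, hanti] at h
      simpa using h
    have S6 : ∑ i, T (b i) (J (b i)) * m (J x) y = c * m (J x) y := by
      rw [← Finset.sum_mul]
    rw [S1, S2, S3, S4, S5, S6] at hsum0
    linarith
  -- the trace c vanishes
  have hc0 : c = 0 := by
    have hsumc : ∑ j, ((N : ℝ) * T (b j) (J (b j)) - 4 * T (b j) (J (b j))
        + c * m (J (b j)) (J (b j))) = 0 :=
      Finset.sum_eq_zero fun j _ => hW (b j) (J (b j))
    have hJone : ∀ j, m (J (b j)) (J (b j)) = 1 := fun j => (hcomp (b j) (b j)).trans (hone j)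
    rw [Finset.sum_add_distrib, Finset.sum_sub_distrib] at hsumc
    rw [← Finset.mul_sum, ← Finset.mul_sum, ← hc] at hsumc
    have hS : ∑ j, c * m (J (b j)) (J (b j)) = c * N := by
      simp [hJone, Finset.sum_const, Finset.card_univ, mul_comm]
    rw [hS] at hsumc
    have hNr : (6 : ℝ) ≤ (N : ℝ) := by exact_mod_cast hN6
    nlinarith [hsumc]
  -- hence γ = 0
  have hT0 : ∀ x y : g, T x y = 0 := by
    intro x y
    have h := hW x y
    rw [hc0] at h
    have hNr : (6 : ℝ) ≤ (N : ℝ) := by exact_mod_cast hN6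
    nlinarith [h]
  have hb : ∀ x y : g, θ (J ⁅x, y⁆) = θ x * θ (J y) - θ (J x) * θ y := by
    intro x y
    have h := hT0 x y
    rw [hGapp] at h
    linarith
  -- nilpotency argument
  obtain ⟨v, hv⟩ := hθne
  set X : g := (θ v)⁻¹ • v with hX
  have hθX : θ X = 1 := by
    rw [hX, map_smul, smul_eq_mul, inv_mul_cancel₀ hv]
  set c₀ : ℝ := θ (J X) with hc₀
  set f : g → g := fun y => ⁅X, y⁆ with hf
  have hmem : ∀ k, ∀ y : g, f^[k] y ∈ lcs g k := by
    intro k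
    induction k with
    | zero => intro y; simp [lcs]
    | succ k ih =>
      intro y
      rw [Function.iterate_succ_apply']
      show ⁅X, f^[k] y⁆ ∈ lcs g (k + 1)
      rw [show ⁅X, f^[k] y⁆ = -⁅f^[k] y, X⁆ from (lie_skew _ _).symm]
      exact Submodule.neg_mem _
        (Submodule.subset_span ⟨f^[k] y, ih y, X, rfl⟩)
  have hstep : ∀ y : g, θ (J ⁅X, y⁆) = θ (J y) - c₀ * θ y := by
    intro y
    rw [hb X y, hθX]
    ring
  have hiter : ∀ k, ∀ y : g, θ (J (f^[k + 1] y)) = θ (J y) - c₀ * θ y := by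
    intro k
    induction k with
    | zero => intro y; simpa using hstep y
    | succ k ih =>
      intro y
      rw [Function.iterate_succ_apply]
      rw [ih (f y)]
      show θ (J ⁅X, y⁆) - c₀ * θ ⁅X, y⁆ = θ (J y) - c₀ * θ y
      rw [hstep y, hθc X y]
      ring
  obtain ⟨K, hK⟩ := hnil
  have hbot : lcs g (K + 1) ≤ ⊥ := by
    show Submodule.span ℝ {z | ∃ x ∈ lcs g K, ∃ y : g, z = ⁅x, y⁆} ≤ ⊥
    apply Submodule.span_le.mpr
    rintro z ⟨x, hx, y, rfl⟩
    rw [hK, Submodule.mem_bot] at hx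
    subst hx
    simp
  have hzero : ∀ y : g, f^[K + 1] y = 0 := by
    intro y
    have h := hbot (hmem (K + 1) y)
    simpa using h
  have hβθ : ∀ y : g, θ (J y) = c₀ * θ y := by
    intro y
    have h := hiter K y
    rw [hzero y] at h
    simp only [map_zero] at h
    linarith
  have hfin := hβθ (J X)
  rw [hJJ, map_neg, hθX, ← hc₀] at hfin
  nlinarith [hfin, sq_nonneg c₀]


end
end
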